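/- Let G be a finite simple graph on N vertices in which every vertex has degree at most Δ. Let c ≥ 1, d₁ ≥ 1 be integers and d₂ ≥ 0 an integer, and let 𝒴 be a family of nonempty subsets of V such that every Y ∈ 𝒴 satisfies |Y| = c and diam(Y) ≤ d₁, and for every vertex i there exists Y ∈ 𝒴 containing a vertex within distance d₂ of i. Set Q† = ∑_{Y∈𝒴} ∏_{j∈Y} s†_j, |Q^p⟩ = (Q†)^p |0̄⟩, and |Q⟩ = |Q^1⟩. Let R_max be a positive integer and for each nonempty X ⊆ V with diam(X) ≤ R_max let h_X be an operator supported on X with h_X |0̄⟩ = 0 and h_X |Q⟩ = 0. If p is a natural number with p·(Δ^{2(d₁−1)+2d₂+R_max}+1) ≤ N and (∑_X h_X) |Q^p⟩ = E'·|Q^p⟩ for some E' ∈ ℂ, then E' = 0. -/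

import Mathlib

open scoped BigOperators
set_option linter.unusedSectionVars false

noncomputable section

/-- The state space of a collection of qubits indexed by `V`: the complex vector space of
functions from configurations `V → Bool` to `ℂ`. -/
abbrev QState (V : Type*) := (V → Bool) → ℂ

section Defs

variable {V : Type*} [Fintype V] [DecidableEq V]

/-- The standard basis vector associated to the configuration `f`. -/
def basisVec (f : V → Bool) : QState V := fun g => if g = f then 1 else 0

/-- The creation operator `s†_i` at site `i`. -/
def creOp (i : V) : Module.End ℂ (QState V) where
  toFun ψ := fun g => if g i = true then ψ (Function.update g i false) else 0
  map_add' ψ φ := by funext g; by_cases h : g i = true <;> simp [h]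
  map_smul' a ψ := by funext g; by_cases h : g i = true <;> simp [h]

/-- The annihilation operator `s_i` at site `i`. -/
def annOp (i : V) : Module.End ℂ (QState V) where
  toFun ψ := fun g => if g i = false then ψ (Function.update g i true) else 0
  map_add' ψ φ := by funext g; by_cases h : g i = false <;> simp [h]
  map_smul' a ψ := by funext g; by_cases h : g i = false <;> simp [h]

@[simp] lemma creOp_apply (i : V) (ψ : QState V) (g : V → Bool) :
    creOp i ψ g = if g i = true then ψ (Function.update g i false) else 0 := rfl

variable (V)

/-- The vacuum `|0̄⟩`: the basis vector of the all-false configuration. -/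
def vac : QState V := basisVec (fun _ => false)

/-- The total raising operator `S† = ∑ i, s†_i`. -/
def Sdag : Module.End ℂ (QState V) := ∑ i : V, creOp i

/-- The number operator `N̂ = ∑ i, s†_i s_i`. -/
def numOp : Module.End ℂ (QState V) := ∑ i : V, creOp i * annOp i

/-- The unnormalized Dicke state `|W^p⟩ = (S†)^p |0̄⟩`. -/
def WState (p : ℕ) : QState V := ((Sdag V) ^ p) (vac V)

variable {V}

/-- Creation operators at different sites commute. -/
lemma creOp_commute (i j : V) : Commute (creOp (V := V) i) (creOp j) := by
  rcases eq_or_ne i j with rfl | hij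
  · exact Commute.refl _
  · show creOp i * creOp j = creOp j * creOp i
    refine LinearMap.ext fun ψ => funext fun g => ?_
    simp only [Module.End.mul_apply, creOp_apply]
    by_cases hi : g i = true <;> by_cases hj : g j = true <;>
      simp [hi, hj, Function.update_of_ne hij, Function.update_of_ne hij.symm,
        Function.update_comm hij]

/-- The product `∏_{j ∈ Y} s†_j` of creation operators over a finite set `Y` of sites
(the operators commute, so the product is well defined; the empty product is the identity). -/
def creProd (Y : Finset V) : Module.End ℂ (QState V) :=
  Y.noncommProd creOp fun a _ b _ _ => creOp_commute a b

/-- The operator `O` is supported on the set of sites `X`. -/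
def SupportedOn (O : Module.End ℂ (QState V)) (X : Set V) : Prop :=
  (∀ f g : V → Bool, (∃ i ∉ X, f i ≠ g i) → O (basisVec f) g = 0) ∧
  (∀ f f' g g' : V → Bool,
    (∀ i ∈ X, f i = f' i) → (∀ i ∈ X, g i = g' i) →
    (∀ i ∉ X, f i = g i) → (∀ i ∉ X, f' i = g' i) →
    O (basisVec f) g = O (basisVec f') g')

/-- An operator is `k`-local if it is a finite sum of operators each supported
on a subset of at most `k` sites. -/
def IsKLocal (k : ℕ) (O : Module.End ℂ (QState V)) : Prop :=
  ∃ (n : ℕ) (h : Fin n → Module.End ℂ (QState V)) (X : Fin n → Finset V),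
    (∀ t, SupportedOn (h t) ↑(X t)) ∧ (∀ t, (X t).card ≤ k) ∧ O = ∑ t, h t

/-- Vertices `i` and `j` are within distance `r` in the graph `G`:
they are joined by a walk of length at most `r`. -/
def WithinDist (G : SimpleGraph V) (r : ℕ) (i j : V) : Prop :=
  ∃ w : G.Walk i j, w.length ≤ r

/-- The ball of radius `r` around vertex `i` in the graph `G`. -/
def gball (G : SimpleGraph V) (i : V) (r : ℕ) : Set V := {j | WithinDist G r i j}

/-- `diam(X) ≤ R` with respect to `G`: every two vertices of `X` are within distance `R - 1`. -/
def GDiamLE (G : SimpleGraph V) (X : Finset V) (R : ℕ) : Prop :=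
  ∀ i ∈ X, ∀ j ∈ X, WithinDist G (R - 1) i j

/-- `H` is a Hamiltonian of range `R` with respect to the graph `G`: a finite sum over
nonempty subsets `X` with `diam(X) ≤ R` of operators supported on `X`. -/
def IsRangeHam (G : SimpleGraph V) (R : ℕ) (H : Module.End ℂ (QState V)) : Prop :=
  ∃ h : Finset V → Module.End ℂ (QState V),
    (∀ X, SupportedOn (h X) ↑X) ∧
    (∀ X, h X ≠ 0 → X.Nonempty ∧ GDiamLE G X R) ∧
    H = ∑ X : Finset V, h X

/-- `H` is a `k`-local Hamiltonian of range `R` with respect to the graph `G`. -/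
def IsKLocalRangeHam (G : SimpleGraph V) (k R : ℕ) (H : Module.End ℂ (QState V)) : Prop :=
  ∃ h : Finset V → Module.End ℂ (QState V),
    (∀ X, SupportedOn (h X) ↑X) ∧
    (∀ X, h X ≠ 0 → X.Nonempty ∧ GDiamLE G X R ∧ X.card ≤ k) ∧
    H = ∑ X : Finset V, h X

/-- An invertible linear operator `M` is `δ`-locality-preserving with respect to `G` if
conjugation by `M` or `M⁻¹` increases the range of any operator by at most `δ`. -/
def LocalityPreserving (G : SimpleGraph V) (δ : ℕ) (M : QState V ≃ₗ[ℂ] QState V) : Prop :=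
  ∀ R : ℕ, 0 < R → ∀ O : Module.End ℂ (QState V), IsRangeHam G R O →
    IsRangeHam G (R + δ) (M.toLinearMap ∘ₗ O ∘ₗ M.symm.toLinearMap) ∧
    IsRangeHam G (R + δ) (M.symm.toLinearMap ∘ₗ O ∘ₗ M.toLinearMap)

end Defs

section Chain

/-- Distance between two sites of the open chain `{0, …, N-1}`. -/
def chainDist {N : ℕ} (i j : Fin N) : ℕ := ((i : ℤ) - (j : ℤ)).natAbs

/-- `diam(X) ≤ R` on the open chain: `diam(X) = 1 + max |i - j|`. -/
def ChainDiamLE {N : ℕ} (X : Finset (Fin N)) (R : ℕ) : Prop :=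
  ∀ i ∈ X, ∀ j ∈ X, chainDist i j + 1 ≤ R

/-- `H` is a Hamiltonian of range `R` on the open chain of `N` sites. -/
def IsChainRangeHam {N : ℕ} (R : ℕ) (H : Module.End ℂ (QState (Fin N))) : Prop :=
  ∃ h : Finset (Fin N) → Module.End ℂ (QState (Fin N)),
    (∀ X, SupportedOn (h X) ↑X) ∧
    (∀ X, h X ≠ 0 → X.Nonempty ∧ ChainDiamLE X R) ∧
    H = ∑ X : Finset (Fin N), h X

/-- `H` is a `k`-local Hamiltonian of range `R` on the open chain of `N` sites. -/
def IsChainKLocalRangeHam {N : ℕ} (k R : ℕ) (H : Module.End ℂ (QState (Fin N))) : Prop :=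
  ∃ h : Finset (Fin N) → Module.End ℂ (QState (Fin N)),
    (∀ X, SupportedOn (h X) ↑X) ∧
    (∀ X, h X ≠ 0 → X.Nonempty ∧ ChainDiamLE X R ∧ X.card ≤ k) ∧
    H = ∑ X : Finset (Fin N), h X

end Chain

end

/-!
Choose `p` vertices pairwise farther apart than `2(d₁ - 1) + 2d₂ + R_max`; this is possible
greedily because a ball of radius `r` has at most `Δ^r + 1` vertices. Next to each of them pick a
member of `𝒴` together with an anchor site in it. These members are disjoint, and since all
weights of `|Q^q⟩` are nonnegative, their union `T` has weight at least one in `|Q^p⟩`.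
Every member of `𝒴`, and the `(d₁ - 1)`-neighbourhood of every support `X`, contains at most one
anchor. Splitting `Q†` into the members that meet `X` and the ones that do not, a binomial
expansion shows that `h_X |Q^p⟩` vanishes at `T`. Comparing coefficients at `T` in
`H |Q^p⟩ = E' |Q^p⟩` then gives `E' = 0`.
-/

lemma Finset.card_inter_le_one_of_pairwise_not {α : Type*} [DecidableEq α] {r : α → α → Prop}
    {A S : Finset α} (hA : (A : Set α).Pairwise fun a b => ¬ r a b)
    (hS : ∀ a ∈ S, ∀ b ∈ S, r a b) : (S ∩ A).card ≤ 1 :=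
  Finset.card_le_one.mpr fun a ha b hb => by
    rw [Finset.mem_inter] at ha hb
    by_contra hab
    exact hA ha.2 hb.2 hab (hS a ha.1 b hb.1)

lemma Commute.mul_add_pow {R : Type*} [Semiring R] {a b c : R} (hab : Commute a b)
    (hcb : Commute c b) (n : ℕ) :
    c * (a + b) ^ n = ∑ m ∈ Finset.range (n + 1), n.choose m • (b ^ (n - m) * (c * a ^ m)) := by
  rw [hab.add_pow, Finset.mul_sum]
  refine Finset.sum_congr rfl fun m _ => ?_
  rw [nsmul_eq_mul', ← mul_assoc, ← mul_assoc, ← ((hcb.mul_left (hab.pow_left m)).pow_right _).eq]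

section Balls

variable {V : Type*} {G : SimpleGraph V}

lemma withinDist_refl (r : ℕ) (i : V) : WithinDist G r i i := ⟨.nil, Nat.zero_le r⟩

lemma WithinDist.symm {r : ℕ} {i j : V} (h : WithinDist G r i j) : WithinDist G r j i :=
  let ⟨w, hw⟩ := h; ⟨w.reverse, by rwa [SimpleGraph.Walk.length_reverse]⟩

lemma WithinDist.mono {r s : ℕ} {i j : V} (h : WithinDist G r i j) (hrs : r ≤ s) :
    WithinDist G s i j :=
  let ⟨w, hw⟩ := h; ⟨w, hw.trans hrs⟩

lemma WithinDist.trans {r s : ℕ} {i j k : V} (h : WithinDist G r i j)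
    (h' : WithinDist G s j k) : WithinDist G (r + s) i k :=
  let ⟨w, hw⟩ := h; let ⟨w', hw'⟩ := h'
  ⟨w.append w', by rw [SimpleGraph.Walk.length_append]; omega⟩

lemma withinDist_zero_iff {i j : V} : WithinDist G 0 i j ↔ i = j :=
  ⟨fun ⟨w, hw⟩ => w.eq_of_length_eq_zero (Nat.le_zero.mp hw), fun h => h ▸ withinDist_refl 0 i⟩

lemma gball_zero (v : V) : gball G v 0 = {v} :=
  Set.ext fun _ => withinDist_zero_iff.trans eq_comm

lemma WithinDist.eq_or_exists_adj {r : ℕ} {i j : V} (h : WithinDist G (r + 1) i j) :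
    i = j ∨ ∃ y, WithinDist G r i y ∧ G.Adj y j := by
  obtain ⟨w, hw⟩ := h
  by_cases hnil : w.Nil
  · exact Or.inl hnil.eq
  · refine Or.inr ⟨w.penultimate, ⟨w.dropLast, ?_⟩, w.adj_penultimate hnil⟩
    rw [SimpleGraph.Walk.length_dropLast]; omega

variable [Fintype V] {Δ : ℕ}

lemma ncard_gball_one_sdiff_le (hdeg : ∀ v : V, (G.neighborSet v).ncard ≤ Δ) (v : V) :
    (gball G v 1 \ {v}).ncard ≤ Δ := by
  refine le_trans (Set.ncard_le_ncard fun u hu => ?_) (hdeg v)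
  obtain ⟨hu, huv⟩ := hu
  rcases WithinDist.eq_or_exists_adj (r := 0) hu with h | ⟨y, hy, hyu⟩
  · exact absurd h.symm huv
  · rwa [← withinDist_zero_iff.mp hy] at hyu

lemma ncard_gball_succ_sdiff_le (hdeg : ∀ v : V, (G.neighborSet v).ncard ≤ Δ) (v : V)
    {r : ℕ} (hr : 1 ≤ r) :
    (gball G v (r + 1) \ gball G v r).ncard ≤ (Δ - 1) * (gball G v r \ {v}).ncard := by
  classical
  set B := gball G v r \ {v}
  have hsub :
      gball G v (r + 1) \ gball G v r ⊆ ⋃ y ∈ B.toFinset, G.neighborSet y \ gball G v r := by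
    rintro u ⟨hu, hur⟩
    rcases WithinDist.eq_or_exists_adj hu with rfl | ⟨y, hy, hyu⟩
    · exact absurd (withinDist_refl r _) hur
    have hyv : y ≠ v := by
      rintro rfl
      exact hur (WithinDist.mono ⟨.cons hyu .nil, le_rfl⟩ hr)
    exact Set.mem_biUnion (Set.mem_toFinset.mpr ⟨hy, hyv⟩) ⟨hyu, hur⟩
  have hout : ∀ y ∈ B.toFinset, (G.neighborSet y \ gball G v r).ncard ≤ Δ - 1 := by
    intro y hy
    obtain ⟨hy, hyv⟩ := Set.mem_toFinset.mp hy
    obtain ⟨z, hz, hzy⟩ : ∃ z ∈ gball G v r, G.Adj y z := by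
      obtain ⟨r', rfl⟩ := Nat.exists_eq_add_of_le' hr
      rcases WithinDist.eq_or_exists_adj hy with h | ⟨z, hz, hzy⟩
      · exact absurd h.symm hyv
      · exact ⟨z, hz.mono (Nat.le_succ r'), hzy.symm⟩
    calc (G.neighborSet y \ gball G v r).ncard ≤ (G.neighborSet y \ {z}).ncard :=
          Set.ncard_le_ncard (Set.sdiff_subset_sdiff_right (Set.singleton_subset_iff.mpr hz))
      _ = (G.neighborSet y).ncard - 1 := Set.ncard_sdiff_singleton_of_mem hzy
      _ ≤ Δ - 1 := Nat.sub_le_sub_right (hdeg y) 1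
  calc (gball G v (r + 1) \ gball G v r).ncard
      ≤ ∑ y ∈ B.toFinset, (G.neighborSet y \ gball G v r).ncard :=
        (Set.ncard_le_ncard hsub).trans (Finset.set_ncard_biUnion_le _ _)
    _ ≤ ∑ _y ∈ B.toFinset, (Δ - 1) := Finset.sum_le_sum hout
    _ = (Δ - 1) * B.ncard := by
        rw [Finset.sum_const, smul_eq_mul, ← Set.ncard_eq_toFinset_card', mul_comm]

lemma ncard_gball_sdiff_le (hdeg : ∀ v : V, (G.neighborSet v).ncard ≤ Δ) (v : V) {r : ℕ}
    (hr : 1 ≤ r) : (gball G v r \ {v}).ncard ≤ Δ ^ r := by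
  induction r, hr using Nat.le_induction with
  | base => simpa using ncard_gball_one_sdiff_le hdeg v
  | succ r hr ih =>
    have hsub :
        gball G v (r + 1) \ {v} ⊆ (gball G v r \ {v}) ∪ (gball G v (r + 1) \ gball G v r) :=
      fun u ⟨hu, huv⟩ => (em (u ∈ gball G v r)).elim (fun h => Or.inl ⟨h, huv⟩)
        (fun h => Or.inr ⟨hu, h⟩)
    calc (gball G v (r + 1) \ {v}).ncard
        ≤ (gball G v r \ {v}).ncard + (Δ - 1) * (gball G v r \ {v}).ncard :=
          (Set.ncard_le_ncard hsub).trans ((Set.ncard_union_le _ _).trans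
            (Nat.add_le_add_left (ncard_gball_succ_sdiff_le hdeg v hr) _))
      _ = (1 + (Δ - 1)) * (gball G v r \ {v}).ncard := by ring
      _ ≤ (1 + (Δ - 1)) * Δ ^ r := Nat.mul_le_mul_left _ ih
      _ ≤ Δ ^ (r + 1) := by
          rcases Nat.eq_zero_or_pos Δ with rfl | hΔ
          · simp [Nat.pos_iff_ne_zero.mp hr]
          · rw [Nat.add_sub_cancel' hΔ, pow_succ']

lemma ncard_gball_le (hdeg : ∀ v : V, (G.neighborSet v).ncard ≤ Δ) (v : V) (r : ℕ) :
    (gball G v r).ncard ≤ Δ ^ r + 1 := by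
  rw [← Set.ncard_sdiff_singleton_add_one (show v ∈ gball G v r from withinDist_refl r v)]
  rcases Nat.eq_zero_or_pos r with rfl | hr
  · simp [gball_zero]
  · exact Nat.add_le_add_right (ncard_gball_sdiff_le hdeg v hr) 1

lemma exists_subset_card_eq_pairwise_not_withinDist
    (hdeg : ∀ v : V, (G.neighborSet v).ncard ≤ Δ) (r : ℕ) :
    ∀ (n : ℕ) (S : Finset V), n * (Δ ^ r + 1) ≤ S.card →
      ∃ P ⊆ S, P.card = n ∧ (P : Set V).Pairwise fun x y => ¬ WithinDist G r x y := by
  classical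
  intro n
  induction n with
  | zero => exact fun S _ => ⟨∅, Finset.empty_subset S, rfl, by simp⟩
  | succ n ih =>
    intro S hS
    obtain ⟨v, hv⟩ : S.Nonempty := Finset.card_pos.mp (lt_of_lt_of_le (by positivity) hS)
    have hfar : n * (Δ ^ r + 1) ≤ (S.filter fun u => ¬ WithinDist G r v u).card := by
      have hnear : (S.filter fun u => WithinDist G r v u).card ≤ Δ ^ r + 1 := by
        rw [← Set.ncard_coe_finset]
        refine le_trans (Set.ncard_le_ncard fun u hu => ?_) (ncard_gball_le hdeg v r)
        exact (Finset.mem_filter.mp hu).2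
      have := Finset.card_filter_add_card_filter_not (s := S) fun u => WithinDist G r v u
      nlinarith
    obtain ⟨P, hPS, hPcard, hP⟩ := ih _ hfar
    have hvP : v ∉ P := fun hv' => (Finset.mem_filter.mp (hPS hv')).2 (withinDist_refl r v)
    refine ⟨insert v P, Finset.insert_subset hv (hPS.trans (Finset.filter_subset _ _)),
      by rw [Finset.card_insert_of_notMem hvP, hPcard], ?_⟩
    rw [Finset.coe_insert, Set.pairwise_insert]
    exact ⟨hP, fun y hy _ => ⟨(Finset.mem_filter.mp (hPS hy)).2,
      fun h => (Finset.mem_filter.mp (hPS hy)).2 h.symm⟩⟩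

end Balls

section Operators

variable {V : Type*} [Fintype V] [DecidableEq V]

lemma basisVec_eq_single (f : V → Bool) : basisVec f = Pi.single f 1 := by
  funext g; simp [basisVec, Pi.single_apply]

lemma apply_eq_sum_basisVec (A : Module.End ℂ (QState V)) (ψ : QState V) (g : V → Bool) :
    A ψ g = ∑ f, ψ f * A (basisVec f) g := by
  rw [LinearMap.pi_apply_eq_sum_univ A ψ, Finset.sum_apply]
  refine Finset.sum_congr rfl fun f _ => ?_
  have : (fun j => if f = j then (1 : ℂ) else 0) = basisVec f := by
    funext j; simp [basisVec, eq_comm]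
  rw [this]; rfl

lemma ext_basisVec {A B : Module.End ℂ (QState V)} (h : ∀ f, A (basisVec f) = B (basisVec f)) :
    A = B :=
  (Pi.basisFun ℂ (V → Bool)).ext fun f => by simpa [basisVec_eq_single] using h f

lemma creOp_basisVec (j : V) (f : V → Bool) :
    creOp j (basisVec f) = if f j = true then 0 else basisVec (Function.update f j true) := by
  funext g
  by_cases hf : f j = true <;> by_cases hg : g j = true <;>
    simp [basisVec, hf, hg, Function.update_eq_iff, Function.eq_update_iff]

namespace SupportedOn

variable {O : Module.End ℂ (QState V)} {X : Set V}

lemma apply_basisVec_update (hO : SupportedOn O X) {j : V} (hj : j ∉ X) {f g : V → Bool}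
    (hfg : f j = g j) (b : Bool) :
    O (basisVec (Function.update f j b)) (Function.update g j b) = O (basisVec f) g := by
  by_cases hoff : ∀ i ∉ X, f i = g i
  · refine hO.2 _ _ _ _ (fun i hi => ?_) (fun i hi => ?_) (fun i hi => ?_) hoff
    · exact Function.update_of_ne (ne_of_mem_of_not_mem hi hj) _ _
    · exact Function.update_of_ne (ne_of_mem_of_not_mem hi hj) _ _
    · by_cases hij : i = j
      · subst hij; simp
      · simp [Function.update_of_ne hij, hoff i hi]
  · push Not at hoff
    obtain ⟨i, hi, hne⟩ := hoff
    have hij : i ≠ j := fun h => hne (h ▸ hfg)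
    rw [hO.1 _ _ ⟨i, hi, hne⟩, hO.1 _ _ ⟨i, hi, by simpa [Function.update_of_ne hij] using hne⟩]

lemma commute_creOp (hO : SupportedOn O X) {j : V} (hj : j ∉ X) : Commute O (creOp j) := by
  refine ext_basisVec fun f => funext fun g => ?_
  simp only [Module.End.mul_apply, creOp_basisVec, creOp_apply]
  by_cases hf : f j = true <;> by_cases hg : g j = true <;> simp only [hf, hg, if_true, map_zero]
  · exact (hO.1 _ _ ⟨j, hj, by simp [hf]⟩).symm
  · rfl
  · have := hO.apply_basisVec_update hj (f := f) (g := Function.update g j false)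
      (by simpa using hf) true
    rwa [Function.update_idem, (Function.update_eq_self_iff (f := g)).mpr hg.symm] at this
  · exact hO.1 _ _ ⟨j, hj, by simpa using Ne.symm hg⟩

end SupportedOn

end Operators

section Tower

variable {V : Type*} [Fintype V] [DecidableEq V]

lemma creProd_empty : creProd (∅ : Finset V) = 1 := Finset.noncommProd_empty _ _

lemma creProd_insert {a : V} {Y : Finset V} (ha : a ∉ Y) :
    creProd (insert a Y) = creOp a * creProd Y :=
  Finset.noncommProd_insert_of_notMem _ _ _ _ ha

lemma creProd_apply (Y : Finset V) (ψ : QState V) (g : V → Bool) :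
    creProd Y ψ g =
      if ∀ i ∈ Y, g i = true then ψ (Y.piecewise (fun _ => false) g) else 0 := by
  induction Y using Finset.induction_on generalizing g with
  | empty => simp [creProd_empty]
  | insert a Y ha ih =>
    rw [creProd_insert ha, Module.End.mul_apply, creOp_apply, ih]
    by_cases hga : g a = true
    · have hY : ∀ i ∈ Y, i ≠ a := fun i hi h => ha (h ▸ hi)
      simp +contextual [hga, hY, Finset.piecewise_insert,
        Finset.update_piecewise_of_notMem (hi := ha)]
    · simp [hga]

lemma commute_creProd (Y Z : Finset V) : Commute (creProd Y) (creProd Z) :=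
  Finset.noncommProd_commute _ _ _ _ fun j _ =>
    (Finset.noncommProd_commute _ _ _ _ fun i _ => creOp_commute j i).symm

lemma SupportedOn.commute_creProd {O : Module.End ℂ (QState V)} {X : Set V}
    (hO : SupportedOn O X) {Y : Finset V} (hY : Disjoint (Y : Set V) X) :
    Commute O (creProd Y) :=
  Finset.noncommProd_commute _ _ _ _ fun _ hj => hO.commute_creOp (Set.disjoint_left.mp hY hj)

/-- The operator `Q†`. -/
def quasiCre (Ys : Finset (Finset V)) : Module.End ℂ (QState V) := ∑ Y ∈ Ys, creProd Y

lemma quasiCre_apply (Ys : Finset (Finset V)) (ψ : QState V) (g : V → Bool) :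
    quasiCre Ys ψ g = ∑ Y ∈ Ys, creProd Y ψ g := by
  simp [quasiCre, LinearMap.sum_apply]

lemma commute_quasiCre (Ys Zs : Finset (Finset V)) : Commute (quasiCre Ys) (quasiCre Zs) :=
  Commute.sum_left _ _ _ fun Y _ => Commute.sum_right _ _ _ fun Z _ => commute_creProd Y Z

lemma SupportedOn.commute_quasiCre {O : Module.End ℂ (QState V)} {X : Set V}
    (hO : SupportedOn O X) {Ys : Finset (Finset V)} (hYs : ∀ Y ∈ Ys, Disjoint (Y : Set V) X) :
    Commute O (quasiCre Ys) :=
  Commute.sum_right _ _ _ fun Y hY => hO.commute_creProd (hYs Y hY)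

lemma quasiCre_filter_add_filter_not (Ys : Finset (Finset V)) (p : Finset V → Prop)
    [DecidablePred p] :
    quasiCre Ys = quasiCre (Ys.filter p) + quasiCre (Ys.filter fun Y => ¬ p Y) :=
  (Finset.sum_filter_add_sum_filter_not Ys p _).symm

section Positivity

open scoped ComplexOrder

lemma vac_nonneg : 0 ≤ vac V := fun g => by
  simp only [vac, basisVec, Pi.zero_apply]; split_ifs <;> simp

lemma creProd_nonneg {ψ : QState V} (hψ : 0 ≤ ψ) (Y : Finset V) : 0 ≤ creProd Y ψ := fun g => by
  rw [creProd_apply]; split_ifs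
  exacts [hψ (Y.piecewise (fun _ => false) g), le_rfl]

lemma quasiCre_nonneg {ψ : QState V} (hψ : 0 ≤ ψ) (Ys : Finset (Finset V)) :
    0 ≤ quasiCre Ys ψ := by
  rw [quasiCre, LinearMap.sum_apply]
  exact Finset.sum_nonneg fun Y _ => creProd_nonneg hψ Y

lemma quasiCre_pow_vac_nonneg (Ys : Finset (Finset V)) (q : ℕ) : 0 ≤ (quasiCre Ys ^ q) (vac V) := by
  induction q with
  | zero => exact vac_nonneg
  | succ q ih => rw [pow_succ', Module.End.mul_apply]; exact quasiCre_nonneg ih Ys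

lemma one_le_quasiCre_pow_vac_apply {Ys 𝒵 : Finset (Finset V)} (h𝒵 : 𝒵 ⊆ Ys)
    (hdisj : (𝒵 : Set (Finset V)).PairwiseDisjoint id) :
    1 ≤ (quasiCre Ys ^ 𝒵.card) (vac V) fun v => decide (∃ Z ∈ 𝒵, v ∈ Z) := by
  induction 𝒵 using Finset.induction_on with
  | empty => simp [vac, basisVec]
  | insert Y 𝒵 hY ih =>
    set ψ := (quasiCre Ys ^ 𝒵.card) (vac V)
    set T : V → Bool := fun v => decide (∃ Z ∈ insert Y 𝒵, v ∈ Z)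
    have hclear : Y.piecewise (fun _ => false) T = fun v => decide (∃ Z ∈ 𝒵, v ∈ Z) := by
      funext v
      by_cases hv : v ∈ Y
      · have : ∀ Z ∈ 𝒵, v ∉ Z := fun Z hZ => Finset.disjoint_left.mp
          (hdisj (by simp) (by simp [hZ]) (by rintro rfl; exact hY hZ)) hv
        simpa [T, hv] using this
      · simp [T, hv]
    rw [Finset.card_insert_of_notMem hY, pow_succ', Module.End.mul_apply, quasiCre_apply]
    calc (1 : ℂ) ≤ ψ _ := ih ((Finset.subset_insert _ _).trans h𝒵) (hdisj.subset (by simp))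
      _ = creProd Y ψ T := by rw [creProd_apply, if_pos (by simp +contextual [T]), hclear]
      _ ≤ _ := Finset.single_le_sum (f := fun Z => creProd Z ψ T)
          (fun Z _ => creProd_nonneg (quasiCre_pow_vac_nonneg Ys _) Z T) (h𝒵 (by simp))

end Positivity

end Tower

section Annihilation

variable {V : Type*} [Fintype V] [DecidableEq V]

def ConfinedTo (ψ : QState V) (U : Finset V) : Prop :=
  ∀ g : V → Bool, ψ g ≠ 0 → ∀ i, g i = true → i ∈ U

lemma confinedTo_vac (U : Finset V) : ConfinedTo (vac V) U := by
  intro g hg i hi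
  simp only [vac, basisVec, ne_eq, ite_eq_right_iff, one_ne_zero, imp_false, not_not] at hg
  simp [hg] at hi

lemma ConfinedTo.creProd {ψ : QState V} {U : Finset V} (hψ : ConfinedTo ψ U) {Y : Finset V}
    (hY : Y ⊆ U) : ConfinedTo (creProd Y ψ) U := by
  intro g hg i hi
  rw [creProd_apply] at hg
  split_ifs at hg
  · by_cases hiY : i ∈ Y
    · exact hY hiY
    · exact hψ _ hg i (by simpa [hiY] using hi)
  · exact absurd rfl hg

lemma ConfinedTo.quasiCre_pow {ψ : QState V} {U : Finset V} (hψ : ConfinedTo ψ U)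
    {Ys : Finset (Finset V)} (hYs : ∀ Y ∈ Ys, Y ⊆ U) (q : ℕ) :
    ConfinedTo ((quasiCre Ys ^ q) ψ) U := by
  induction q with
  | zero => exact hψ
  | succ q ih =>
    intro g hg
    rw [pow_succ', Module.End.mul_apply, quasiCre_apply] at hg
    obtain ⟨Y, hY, hYg⟩ := Finset.exists_ne_zero_of_sum_ne_zero hg
    exact ih.creProd (hYs Y hY) g hYg

lemma SupportedOn.confinedTo {O : Module.End ℂ (QState V)} {X U : Finset V}
    (hO : SupportedOn O X) (hXU : X ⊆ U) {ψ : QState V} (hψ : ConfinedTo ψ U) :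
    ConfinedTo (O ψ) U := by
  intro g hg i hi
  rw [apply_eq_sum_basisVec] at hg
  obtain ⟨f, -, hf⟩ := Finset.exists_ne_zero_of_sum_ne_zero hg
  by_contra hiU
  have hfi : f i = g i := by
    by_contra hne
    exact hf (by rw [hO.1 f g ⟨i, fun h => hiU (hXU h), hne⟩, mul_zero])
  exact hiU (hψ f (left_ne_zero_of_mul hf) i (hfi.trans hi))

def occCount (A : Finset V) (g : V → Bool) : ℕ := (A.filter fun i => g i = true).card

lemma ConfinedTo.occCount_le {ψ : QState V} {U : Finset V} (hψ : ConfinedTo ψ U) {g : V → Bool}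
    (hg : ψ g ≠ 0) (A : Finset V) : occCount A g ≤ (U ∩ A).card :=
  Finset.card_le_card fun i hi => by
    obtain ⟨hiA, hgi⟩ := Finset.mem_filter.mp hi
    exact Finset.mem_inter.mpr ⟨hψ g hg i hgi, hiA⟩

lemma occCount_le_occCount_piecewise_add (A Y : Finset V) (g : V → Bool) :
    occCount A g ≤ occCount A (Y.piecewise (fun _ => false) g) + (Y ∩ A).card := by
  refine (Finset.card_le_card fun i hi => ?_).trans (Finset.card_union_le _ _)
  obtain ⟨hiA, hgi⟩ := Finset.mem_filter.mp hi
  by_cases hiY : i ∈ Y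
  · exact Finset.mem_union_right _ (Finset.mem_inter.mpr ⟨hiY, hiA⟩)
  · exact Finset.mem_union_left _ (Finset.mem_filter.mpr ⟨hiA, by simpa [hiY] using hgi⟩)

lemma quasiCre_pow_apply_eq_zero_of_lt_occCount {A : Finset V} {Ys : Finset (Finset V)}
    (hYs : ∀ Y ∈ Ys, (Y ∩ A).card ≤ 1) {ψ : QState V} {k : ℕ}
    (hψ : ∀ g, k < occCount A g → ψ g = 0) (q : ℕ) :
    ∀ g, k + q < occCount A g → (quasiCre Ys ^ q) ψ g = 0 := by
  induction q with
  | zero => exact hψ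
  | succ q ih =>
    intro g hg
    rw [pow_succ', Module.End.mul_apply, quasiCre_apply]
    refine Finset.sum_eq_zero fun Y hY => ?_
    rw [creProd_apply]
    split_ifs
    · have := occCount_le_occCount_piecewise_add A Y g
      exact ih _ (by have := hYs Y hY; omega)
    · rfl

/-- Split `Q† = Q_near + Q_far` by whether a member of `𝒴` meets `X`. As `Q_far` commutes
with `O`, the binomial expansion of `O (Q_near + Q_far)^p |0̄⟩` consists of the terms
`Q_far^(p-m) O Q_near^m |0̄⟩`. They vanish for `m ≤ 1` by the hypotheses. For `m ≥ 2`,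
`O Q_near^m |0̄⟩` lives on configurations occupying at most one site of `A`, and the `p - m`
factors of `Q_far` cannot raise that number to `p`. -/
theorem apply_quasiCre_pow_vac_eq_zero {O : Module.End ℂ (QState V)}
    {X U A : Finset V} {Ys : Finset (Finset V)} (hO : SupportedOn O X)
    (hvac : O (vac V) = 0) (hQ : O (quasiCre Ys (vac V)) = 0) (hXU : X ⊆ U)
    (hnear : ∀ Y ∈ Ys, ¬ Disjoint Y X → Y ⊆ U) (hUA : (U ∩ A).card ≤ 1)
    (hYsA : ∀ Y ∈ Ys, (Y ∩ A).card ≤ 1) {p : ℕ} {g : V → Bool} (hg : p ≤ occCount A g) :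
    O ((quasiCre Ys ^ p) (vac V)) g = 0 := by
  set Qn := quasiCre (Ys.filter fun Y => ¬ Disjoint Y X)
  set Qf := quasiCre (Ys.filter fun Y => Disjoint Y X)
  have hsplit : quasiCre Ys = Qn + Qf := by
    rw [quasiCre_filter_add_filter_not Ys (Disjoint · X), add_comm]
  have hOf : Commute O Qf :=
    hO.commute_quasiCre fun Y hY => Finset.disjoint_coe.mpr (Finset.mem_filter.mp hY).2
  have hsmall : ∀ m ≤ 1, O ((Qn ^ m) (vac V)) = 0 := by
    intro m hm
    interval_cases m
    · exact hvac
    · rw [pow_one, show Qn = quasiCre Ys - Qf by rw [hsplit, add_sub_cancel_right],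
        LinearMap.sub_apply, map_sub, hQ, ← Module.End.mul_apply, hOf.eq, Module.End.mul_apply,
        hvac, map_zero, sub_zero]
  have hlarge : ∀ m, 2 ≤ m → m ≤ p → (Qf ^ (p - m)) (O ((Qn ^ m) (vac V))) g = 0 := by
    intro m hm hmp
    have hconf : ConfinedTo (O ((Qn ^ m) (vac V))) U :=
      hO.confinedTo hXU ((confinedTo_vac U).quasiCre_pow
        (fun Y hY => hnear Y (Finset.mem_filter.mp hY).1 (Finset.mem_filter.mp hY).2) m)
    refine quasiCre_pow_apply_eq_zero_of_lt_occCount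
      (fun Y hY => hYsA Y (Finset.mem_filter.mp hY).1) (k := 1) (fun g' hg' => ?_) _ g (by omega)
    by_contra hne
    exact absurd (hconf.occCount_le hne A) (by omega)
  rw [← Module.End.mul_apply, hsplit, (commute_quasiCre _ _).mul_add_pow hOf,
    LinearMap.sum_apply, Finset.sum_apply]
  refine Finset.sum_eq_zero fun m hm => ?_
  simp only [LinearMap.smul_apply, Module.End.mul_apply, Pi.smul_apply]
  rcases le_or_gt m 1 with h | h
  · rw [hsmall m h, map_zero, Pi.zero_apply, smul_zero]
  · rw [hlarge m h (by simpa [Nat.lt_succ_iff] using hm), smul_zero]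

end Annihilation

section Anchors

variable {V : Type*} [Fintype V] [DecidableEq V] {G : SimpleGraph V}

lemma exists_disjoint_subfamily_separated_anchors {Δ d d₂ D p : ℕ}
    (hdeg : ∀ v : V, (G.neighborSet v).ncard ≤ Δ) {Ys : Finset (Finset V)}
    (hYs : ∀ Y ∈ Ys, GDiamLE G Y d) (hcover : ∀ i : V, ∃ Y ∈ Ys, ∃ j ∈ Y, WithinDist G d₂ i j)
    (hD : 2 * (d - 1) ≤ D) (hp : p * (Δ ^ (D + 2 * d₂) + 1) ≤ Fintype.card V) :
    ∃ 𝒵 ⊆ Ys, (𝒵 : Set (Finset V)).PairwiseDisjoint id ∧ 𝒵.card = p ∧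
      ∃ A : Finset V, A.card = p ∧ (∀ a ∈ A, ∃ Z ∈ 𝒵, a ∈ Z) ∧
        (A : Set V).Pairwise fun a b => ¬ WithinDist G D a b := by
  classical
  obtain ⟨P, -, hPcard, hPsep⟩ :=
    exists_subset_card_eq_pairwise_not_withinDist hdeg _ p Finset.univ hp
  choose Y hY J hJY hJ using hcover
  have hJsep : ∀ x ∈ P, ∀ y ∈ P, WithinDist G D (J x) (J y) → x = y :=
    fun x hx y hy hxy => by_contra fun hne =>
      hPsep hx hy hne (((hJ x).trans (hxy.trans (hJ y).symm)).mono (by omega))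
  have hYsep : ∀ x ∈ P, ∀ y ∈ P, ¬ Disjoint (Y x) (Y y) → x = y := fun x hx y hy hxy => by
    obtain ⟨v, hvx, hvy⟩ := Finset.not_disjoint_iff.mp hxy
    exact hJsep x hx y hy
      (((hYs _ (hY x) _ (hJY x) v hvx).trans (hYs _ (hY y) v hvy _ (hJY y))).mono (by omega))
  refine ⟨P.image Y, Finset.image_subset_iff.mpr fun x _ => hY x, ?_, ?_, P.image J, ?_, ?_, ?_⟩
  · rw [Finset.coe_image]
    rintro _ ⟨x, hx, rfl⟩ _ ⟨y, hy, rfl⟩ hne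
    exact not_not.mp fun h => hne (congrArg Y (hYsep x hx y hy h))
  · refine (Finset.card_image_of_injOn (f := Y) fun x hx y hy hxy =>
      hYsep x hx y hy ?_).trans hPcard
    exact Finset.not_disjoint_iff.mpr ⟨J x, hJY x, hxy ▸ hJY x⟩
  · exact (Finset.card_image_of_injOn (f := J) fun x hx y hy hxy =>
      hJsep x hx y hy (hxy ▸ withinDist_refl _ _)).trans hPcard
  · simp only [Finset.mem_image]
    rintro _ ⟨x, hx, rfl⟩
    exact ⟨Y x, ⟨x, hx, rfl⟩, hJY x⟩
  · rw [Finset.coe_image]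
    rintro _ ⟨x, hx, rfl⟩ _ ⟨y, hy, rfl⟩ hne hxy
    exact hne (congrArg J (hJsep x hx y hy hxy))

theorem apply_quasiCre_pow_vac_eq_zero_of_separated {d R : ℕ} {O : Module.End ℂ (QState V)}
    {X A : Finset V} {Ys : Finset (Finset V)} (hO : SupportedOn O X)
    (hvac : O (vac V) = 0) (hQ : O (quasiCre Ys (vac V)) = 0) (hX : GDiamLE G X R)
    (hYs : ∀ Y ∈ Ys, GDiamLE G Y d)
    (hA : (A : Set V).Pairwise fun a b => ¬ WithinDist G (2 * (d - 1) + R) a b)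
    {p : ℕ} {g : V → Bool} (hg : p ≤ occCount A g) :
    O ((quasiCre Ys ^ p) (vac V)) g = 0 := by
  classical
  refine apply_quasiCre_pow_vac_eq_zero
    (U := Finset.univ.filter fun u => ∃ x ∈ X, WithinDist G (d - 1) x u)
    hO hvac hQ ?_ ?_ ?_ ?_ hg
  · exact fun x hx => Finset.mem_filter.mpr ⟨Finset.mem_univ _, x, hx, withinDist_refl _ _⟩
  · intro Y hY hYX u hu
    obtain ⟨x, hxY, hxX⟩ := Finset.not_disjoint_iff.mp hYX
    exact Finset.mem_filter.mpr ⟨Finset.mem_univ _, x, hxX, hYs Y hY x hxY u hu⟩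
  · refine Finset.card_inter_le_one_of_pairwise_not hA fun u hu w hw => ?_
    obtain ⟨x, hx, hxu⟩ := (Finset.mem_filter.mp hu).2
    obtain ⟨y, hy, hyw⟩ := (Finset.mem_filter.mp hw).2
    exact (hxu.symm.trans ((hX x hx y hy).trans hyw)).mono (by omega)
  · exact fun Y hY => Finset.card_inter_le_one_of_pairwise_not hA fun a ha b hb =>
      (hYs Y hY a ha b hb).mono (by omega)

end Anchors

theorem generalized_annihilation_finite_fraction_general
    {V : Type*} [Fintype V] [DecidableEq V]
    (G : SimpleGraph V)
    (Δ : ℕ) (hdeg : ∀ v : V, (G.neighborSet v).ncard ≤ Δ)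
    (d₁ d₂ : ℕ)
    (Ys : Finset (Finset V))
    (hYdiam : ∀ Y ∈ Ys, GDiamLE G Y d₁)
    (hcover : ∀ i : V, ∃ Y ∈ Ys, ∃ j ∈ Y, WithinDist G d₂ i j)
    (Qd : Module.End ℂ (QState V)) (hQd : Qd = ∑ Y ∈ Ys, creProd Y)
    (Rmax : ℕ)
    (h : Finset V → Module.End ℂ (QState V))
    (hsupp : ∀ X, SupportedOn (h X) ↑X)
    (hdiam : ∀ X, ¬(X.Nonempty ∧ GDiamLE G X Rmax) → h X = 0)
    (hannv : ∀ X, h X (vac V) = 0)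
    (hannQ : ∀ X, h X ((Qd ^ 1) (vac V)) = 0)
    (p : ℕ) (E' : ℂ)
    (hp : p * (Δ ^ (2 * (d₁ - 1) + 2 * d₂ + Rmax) + 1) ≤ Fintype.card V)
    (hE : (∑ X : Finset V, h X) ((Qd ^ p) (vac V)) = E' • (Qd ^ p) (vac V)) :
    E' = 0 := by
  change Qd = quasiCre Ys at hQd
  subst hQd
  obtain ⟨𝒵, h𝒵Ys, h𝒵disj, h𝒵card, A, hAcard, hA𝒵, hAsep⟩ :=
    exists_disjoint_subfamily_separated_anchors (D := 2 * (d₁ - 1) + Rmax) hdeg hYdiam hcover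
      le_self_add (by rwa [add_right_comm] at hp)
  set T : V → Bool := fun v => decide (∃ Z ∈ 𝒵, v ∈ Z)
  have hψT : (quasiCre Ys ^ p) (vac V) T ≠ 0 := by
    open scoped ComplexOrder in
    exact (zero_lt_one.trans_le (h𝒵card ▸ one_le_quasiCre_pow_vac_apply h𝒵Ys h𝒵disj)).ne'
  have hocc : p ≤ occCount A T := by
    rw [occCount, Finset.filter_true_of_mem fun a ha => decide_eq_true (hA𝒵 a ha), hAcard]
  have hterm : ∀ X, h X ((quasiCre Ys ^ p) (vac V)) T = 0 := by
    intro X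
    by_cases hX0 : h X = 0
    · simp [hX0]
    exact apply_quasiCre_pow_vac_eq_zero_of_separated (hsupp X) (hannv X)
      (by simpa only [pow_one] using hannQ X) (not_not.mp (mt (hdiam X) hX0)).2 hYdiam hAsep hocc
  have hET := congrFun hE T
  simp only [LinearMap.sum_apply, Finset.sum_apply, hterm, Finset.sum_const_zero, Pi.smul_apply,
    smul_eq_mul] at hET
  exact (mul_eq_zero.mp hET.symm).resolve_right hψT

/-- Annihilation of a finite fraction of a generalized quasiparticle tower
`|Q^p⟩ = (Q†)^p |0̄⟩` with `Q† = ∑_{Y ∈ 𝒴} ∏_{j ∈ Y} s†_j`. -/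
theorem generalized_annihilation_finite_fraction
    {V : Type*} [Fintype V] [DecidableEq V]
    (G : SimpleGraph V)
    (Δ : ℕ) (hdeg : ∀ v : V, (G.neighborSet v).ncard ≤ Δ)
    (c d₁ d₂ : ℕ) (hc : 1 ≤ c) (hd₁ : 1 ≤ d₁)
    (Ys : Finset (Finset V))
    (hYne : ∀ Y ∈ Ys, Y.Nonempty)
    (hYcard : ∀ Y ∈ Ys, Y.card = c)
    (hYdiam : ∀ Y ∈ Ys, GDiamLE G Y d₁)
    (hcover : ∀ i : V, ∃ Y ∈ Ys, ∃ j ∈ Y, WithinDist G d₂ i j)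
    (Qd : Module.End ℂ (QState V)) (hQd : Qd = ∑ Y ∈ Ys, creProd Y)
    (Rmax : ℕ) (hRmax : 0 < Rmax)
    (h : Finset V → Module.End ℂ (QState V))
    (hsupp : ∀ X, SupportedOn (h X) ↑X)
    (hdiam : ∀ X, ¬(X.Nonempty ∧ GDiamLE G X Rmax) → h X = 0)
    (hannv : ∀ X, h X (vac V) = 0)
    (hannQ : ∀ X, h X ((Qd ^ 1) (vac V)) = 0)
    (p : ℕ) (E' : ℂ)
    (hp : p * (Δ ^ (2 * (d₁ - 1) + 2 * d₂ + Rmax) + 1) ≤ Fintype.card V)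
    (hE : (∑ X : Finset V, h X) ((Qd ^ p) (vac V)) = E' • (Qd ^ p) (vac V)) :
    E' = 0 :=
  generalized_annihilation_finite_fraction_general G Δ hdeg d₁ d₂ Ys hYdiam hcover Qd hQd Rmax h
    hsupp hdiam hannv hannQ p E' hp hE
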